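/- arXiv:1512.02490 — 6 statements merged into one kernel-verified Lean document; each statement's English description precedes it below -/
import Mathlib

section
/- Let H be a finite-dimensional complex Hilbert space. Let f:(0,∞)→(0,∞) be continuous with lim_{ε→0⁺} f(ε) = ∞, and let g:[0,∞)→[0,∞) be continuous, monotone increasing, with g(0)=0 and lim_{t→∞} g(t) = ∞. Let A, B be positive semidefinite operators on H with supp A ⊆ supp B (equivalently, ker B ⊆ ker A). Then the limit lim_{ε→0⁺} tr g( f(B+εI) A f(B+εI) ) exists and equals tr g( f₀(B) A f₀(B) ), where f₀:[0,∞)→[0,∞) agrees with f on (0,∞) and f₀(0)=0. -/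
open Matrix
open scoped ComplexOrder

/-- Apply a real function to (the eigenvalues of) a Hermitian matrix via the
spectral decomposition (functional calculus); junk value `0` otherwise. -/
noncomputable def matFun {n : ℕ} (h : ℝ → ℝ) (A : Matrix (Fin n) (Fin n) ℂ) :
    Matrix (Fin n) (Fin n) ℂ :=
  if hA : A.IsHermitian then hA.cfc h else 0

/-- The (real part of the) trace of a complex matrix. -/
noncomputable def retr {n : ℕ} (M : Matrix (Fin n) (Fin n) ℂ) : ℝ := M.trace.re

/-- Real power of a positive semidefinite matrix via the spectral decomposition. -/
noncomputable def rpowMat {n : ℕ} (A : Matrix (Fin n) (Fin n) ℂ) (r : ℝ) :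
    Matrix (Fin n) (Fin n) ℂ := matFun (fun t => t ^ r) A

/-- Density operators: positive semidefinite matrices of trace `1`. -/
def Density (n : ℕ) := {A : Matrix (Fin n) (Fin n) ℂ // A.PosSemidef ∧ A.trace = 1}

/-- `supp A ⊆ supp B`, i.e. the range of `A` is contained in the range of `B`. -/
def suppLE {n : ℕ} (A B : Matrix (Fin n) (Fin n) ℂ) : Prop :=
  LinearMap.range (Matrix.toLin' A) ≤ LinearMap.range (Matrix.toLin' B)

/-- `supp A ⟂ supp B`: the ranges of `A` and `B` are orthogonal. -/
def suppOrth {n : ℕ} (A B : Matrix (Fin n) (Fin n) ℂ) : Prop :=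
  ∀ x y : Fin n → ℂ, star (A.mulVec x) ⬝ᵥ B.mulVec y = 0

/-- The extension `f₀` of `f : (0,∞) → (0,∞)` to `[0,∞)` with `f₀ 0 = 0`. -/
noncomputable def extZero (f : ℝ → ℝ) : ℝ → ℝ := fun t => if 0 < t then f t else 0

/-- The generalized divergence `D'_{f,g}(A‖B) = tr g(f₀(B) A f₀(B))` (real-valued version,
used when `lim_{ε→0⁺} f(ε) = 0`). -/
noncomputable def Dfg {n : ℕ} (f g : ℝ → ℝ) (A B : Matrix (Fin n) (Fin n) ℂ) : ℝ :=
  retr (matFun g (matFun (extZero f) B * A * matFun (extZero f) B))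

open scoped Classical in
/-- The generalized divergence `D'_{f,g}(A‖B)`: equal to `tr g(f₀(B) A f₀(B))` if
`supp A ⊆ supp B` and `∞` otherwise (used when `lim_{ε→0⁺} f(ε) = ∞`). -/
noncomputable def DfgE {n : ℕ} (f g : ℝ → ℝ) (A B : Matrix (Fin n) (Fin n) ℂ) : EReal :=
  if suppLE A B then ((Dfg f g A B : ℝ) : EReal) else ⊤

open scoped Classical in
/-- The quantum Rényi divergence `D_α(A‖B)` of density operators `A, B`
(with the convention `tr A = 1`), with values in the extended reals. -/
noncomputable def Dalpha {n : ℕ} (α : ℝ) (A B : Matrix (Fin n) (Fin n) ℂ) : EReal :=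
  if (α < 1 ∧ ¬ suppOrth A B) ∨ (1 < α ∧ suppLE A B) then
    (((α - 1)⁻¹ * Real.log (retr (rpowMat
      (rpowMat B ((1 - α) / (2 * α)) * A * rpowMat B ((1 - α) / (2 * α))) α)) : ℝ) : EReal)
  else ⊤

/-- The quantum Rényi divergence on the cone of positive definite matrices
(a finite real number there). -/
noncomputable def DalphaPD {n : ℕ} (α : ℝ) (A B : Matrix (Fin n) (Fin n) ℂ) : ℝ :=
  (α - 1)⁻¹ * Real.log ((retr A)⁻¹ * retr (rpowMat
    (rpowMat B ((1 - α) / (2 * α)) * A * rpowMat B ((1 - α) / (2 * α))) α))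

/-- Rank-one (orthogonal) projections: `P = x ⊗ x` for a unit vector `x`. -/
def IsRankOneProj {n : ℕ} (P : Matrix (Fin n) (Fin n) ℂ) : Prop :=
  ∃ x : Fin n → ℂ, star x ⬝ᵥ x = 1 ∧ P = Matrix.vecMulVec x (star x)

/-! Since `supp A ⊆ supp B`, the matrix `A` does not see the kernel of `B`: `h₁(B) A = h₂(B) A`
whenever `h₁` and `h₂` agree on the nonzero spectrum of `B`. Hence
`f(B + εI) A f(B + εI) = f_ε(B) A f_ε(B)` with `f_ε t = f (t + ε)` for `t > 0` and `f_ε 0 = 0`,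
and `f_ε → f₀` pointwise on the finite spectrum of `B`, so no blow-up of `f` at `0` is felt.
The limit then passes through `M ↦ tr g(M)`, which is continuous on positive semidefinite
matrices. -/

open Set Filter Topology

section CFC

variable {X R A : Type*} {p : A → Prop} [CommRing R] [StarRing R] [MetricSpace R]
  [IsTopologicalRing R] [ContinuousStar R] [Ring A] [StarRing A] [TopologicalSpace A]
  [Algebra R A] [ContinuousFunctionalCalculus R A p]

lemma cfc_mul_self_eq_zero {h : R → R} {a : A} (hh : ∀ t ∈ spectrum R a, t ≠ 0 → h t = 0) :
    cfc h a * a = 0 := by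
  by_cases ha : p a
  · by_cases hc : ContinuousOn h (spectrum R a)
    · have hmul : cfc (fun t => h t * t) a = cfc h a * a := by
        rw [cfc_mul h (fun t => t) a, cfc_id' R a]
      rw [← hmul, cfc_congr (g := 0) fun t ht => ?_, cfc_zero]
      by_cases ht0 : t = 0
      · simp [ht0]
      · simp [hh t ht ht0]
    · rw [cfc_apply_of_not_continuousOn a hc, zero_mul]
  · rw [cfc_apply_of_not_predicate a ha, zero_mul]

lemma tendsto_cfc_fun_of_finite_spectrum {l : Filter X} {F : X → R → R} {f : R → R} {a : A}
    (hfin : (spectrum R a).Finite)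
    (hF : ∀ t ∈ spectrum R a, Tendsto (fun x => F x t) l (𝓝 (f t))) :
    Tendsto (fun x => cfc (F x) a) l (𝓝 (cfc f a)) := by
  refine tendsto_cfc_fun (Metric.tendstoUniformlyOn_iff.2 fun δ hδ => ?_)
    (Eventually.of_forall fun x => hfin.continuousOn (F x))
  refine hfin.eventually_all.2 fun t ht => ?_
  filter_upwards [Metric.tendsto_nhds.1 (hF t ht) δ hδ] with x hx
  rwa [dist_comm]

variable [ContinuousMap.UniqueHom R A]

lemma cfc_comp_add_const (f : R → R) (r : R) (a : A)
    (hf : ContinuousOn f ((· + r) '' spectrum R a)) (ha : p a) :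
    cfc (fun t => f (t + r)) a = cfc f (a + algebraMap R A r) := by
  rw [cfc_comp' f (· + r) a hf (by fun_prop) ha, cfc_add_const r (fun t => t) a (by fun_prop) ha,
    cfc_id' R a ha]

end CFC

lemma continuousOn_cfc_of_continuousOn_Ici {A : Type*} {p : A → Prop} [NormedRing A]
    [StarRing A] [NormedAlgebra ℝ A] [CompleteSpace A] [ContinuousStar A]
    [IsometricContinuousFunctionalCalculus ℝ A p] {g : ℝ → ℝ} (hg : ContinuousOn g (Ici 0)) :
    ContinuousOn (cfc g) {a : A | p a ∧ spectrum ℝ a ⊆ Ici 0} := by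
  have hg' : Continuous fun t => g (max t 0) :=
    hg.comp_continuous (continuous_id.max continuous_const) fun t => le_max_right t 0
  have : ContinuousOn (cfc fun t => g (max t 0)) {a : A | p a} :=
    ContinuousOn.cfc_of_mem_nhdsSet _ univ_mem continuousOn_id (fun _ ha => ha) hg'.continuousOn
  refine (this.mono fun a ha => ha.1).congr fun a ha => cfc_congr fun t ht => ?_
  rw [max_eq_left (ha.2 ht)]

lemma tendsto_extZero_comp_add {f : ℝ → ℝ} (hf : ContinuousOn f (Ioi 0)) (t : ℝ) :
    Tendsto (fun ε => extZero (fun s => f (s + ε)) t) (𝓝[>] 0) (𝓝 (extZero f t)) := by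
  by_cases ht : 0 < t
  · simp only [extZero, if_pos ht]
    have hshift : Tendsto (fun ε : ℝ => t + ε) (𝓝[>] 0) (𝓝 t) :=
      (continuous_const_add t).tendsto' 0 t (add_zero t) |>.mono_left nhdsWithin_le_nhds
    exact (hf.continuousAt (Ioi_mem_nhds ht)).tendsto.comp hshift
  · simp only [extZero, if_neg ht, tendsto_const_nhds]

namespace Matrix

variable {m : Type*} [Fintype m] [DecidableEq m]

open scoped MatrixOrder in
lemma PosSemidef.nonneg_of_mem_spectrum {𝕜 : Type*} [RCLike 𝕜] {M : Matrix m m 𝕜}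
    (hM : M.PosSemidef) {t : ℝ} (ht : t ∈ spectrum ℝ M) : 0 ≤ t :=
  spectrum_nonneg_of_nonneg hM.nonneg ht

lemma mul_eq_zero_of_range_le {R : Type*} [CommRing R] {M A B : Matrix m m R} (hMB : M * B = 0)
    (hAB : LinearMap.range (toLin' A) ≤ LinearMap.range (toLin' B)) : M * A = 0 := by
  apply toLin'.injective
  rw [toLin'_mul, map_zero, ← LinearMap.range_le_ker_iff]
  refine hAB.trans (LinearMap.range_le_ker_iff.2 ?_)
  rw [← toLin'_mul, hMB, map_zero]

lemma cfc_mul_eq_of_range_le {A B : Matrix m m ℂ}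
    (hAB : LinearMap.range (toLin' A) ≤ LinearMap.range (toLin' B)) {h₁ h₂ : ℝ → ℝ}
    (hh : ∀ t ∈ spectrum ℝ B, t ≠ 0 → h₁ t = h₂ t) : cfc h₁ B * A = cfc h₂ B * A := by
  have hfin := B.finite_real_spectrum
  rw [← sub_eq_zero, ← sub_mul, ← cfc_sub h₁ h₂ B (hfin.continuousOn _) (hfin.continuousOn _)]
  exact mul_eq_zero_of_range_le (cfc_mul_self_eq_zero fun t ht ht0 => sub_eq_zero.2 (hh t ht ht0))
    hAB

lemma cfc_mul_mul_cfc_eq_of_range_le {A B : Matrix m m ℂ} (hA : A.IsHermitian)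
    (hAB : LinearMap.range (toLin' A) ≤ LinearMap.range (toLin' B)) {h₁ h₂ : ℝ → ℝ}
    (hh : ∀ t ∈ spectrum ℝ B, t ≠ 0 → h₁ t = h₂ t) :
    cfc h₁ B * A * cfc h₁ B = cfc h₂ B * A * cfc h₂ B := by
  have hleft := cfc_mul_eq_of_range_le hAB hh
  have hright : A * cfc h₁ B = A * cfc h₂ B := by
    simpa only [star_mul, hA.star_eq, (cfc_predicate h₁ B).star_eq, (cfc_predicate h₂ B).star_eq]
      using congrArg star hleft
  rw [hleft, mul_assoc, hright, ← mul_assoc]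

lemma PosSemidef.cfc_mul_mul_cfc {A : Matrix m m ℂ} (hA : A.PosSemidef) (h : ℝ → ℝ)
    (B : Matrix m m ℂ) : (cfc h B * A * cfc h B).PosSemidef := by
  have hH : (cfc h B).IsHermitian := cfc_predicate h B
  simpa only [hH.eq] using hA.mul_mul_conjTranspose_same (cfc h B)

lemma IsHermitian.cfc_add_smul_one {B : Matrix m m ℂ} (hB : B.IsHermitian) (f : ℝ → ℝ) (r : ℝ) :
    cfc f (B + (r : ℂ) • 1) = cfc (fun t => f (t + r)) B := by
  rw [cfc_comp_add_const (p := IsSelfAdjoint) f r B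
    (B.finite_real_spectrum.image _ |>.continuousOn f) hB, Algebra.algebraMap_eq_smul_one,
    Complex.coe_smul]

lemma IsHermitian.matFun_eq_cfc {n : ℕ} {M : Matrix (Fin n) (Fin n) ℂ} (hM : M.IsHermitian)
    (h : ℝ → ℝ) : matFun h M = cfc h M := by
  rw [matFun, dif_pos hM, hM.cfc_eq]

end Matrix

open scoped Matrix.Norms.L2Operator in
lemma continuousOn_retr_matFun {n : ℕ} {g : ℝ → ℝ} (hg : ContinuousOn g (Ici 0)) :
    ContinuousOn (fun M : Matrix (Fin n) (Fin n) ℂ => retr (matFun g M)) {M | M.PosSemidef} := by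
  have hcfc : ContinuousOn (cfc g) {M : Matrix (Fin n) (Fin n) ℂ | M.PosSemidef} :=
    (continuousOn_cfc_of_continuousOn_Ici hg).mono fun M hM =>
      ⟨hM.1, fun _ => hM.nonneg_of_mem_spectrum⟩
  exact (Complex.continuous_re.comp continuous_id.matrix_trace).comp_continuousOn
    (hcfc.congr fun M hM => hM.1.matFun_eq_cfc g)

theorem stmt6_general {n : ℕ}
    (f : ℝ → ℝ)
    (hf_cont : ContinuousOn f (Set.Ioi 0))
    (g : ℝ → ℝ)
    (hg_cont : ContinuousOn g (Set.Ici 0))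
    (A B : Matrix (Fin n) (Fin n) ℂ) (hA : A.PosSemidef) (hB : B.PosSemidef)
    (hsupp : suppLE A B) :
    Filter.Tendsto
      (fun ε : ℝ => retr (matFun g
        (matFun f (B + (ε : ℂ) • 1) * A * matFun f (B + (ε : ℂ) • 1))))
      (nhdsWithin 0 (Set.Ioi 0))
      (nhds (retr (matFun g (matFun (extZero f) B * A * matFun (extZero f) B)))) := by
  set X : ℝ → Matrix (Fin n) (Fin n) ℂ := fun ε => cfc (extZero fun t => f (t + ε)) B
  have hconj (ε : ℝ) :
      matFun f (B + (ε : ℂ) • 1) * A * matFun f (B + (ε : ℂ) • 1) = X ε * A * X ε := by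
    have hBε : (B + (ε : ℂ) • 1).IsHermitian :=
      hB.1.add (isHermitian_one.smul (Complex.conj_ofReal ε))
    rw [hBε.matFun_eq_cfc, hB.1.cfc_add_smul_one]
    refine cfc_mul_mul_cfc_eq_of_range_le hA.1 hsupp fun t ht ht0 => ?_
    simp [extZero, (hB.nonneg_of_mem_spectrum ht).lt_of_ne' ht0]
  have hX : Tendsto X (𝓝[>] 0) (𝓝 (cfc (extZero f) B)) :=
    tendsto_cfc_fun_of_finite_spectrum B.finite_real_spectrum
      fun t _ => tendsto_extZero_comp_add hf_cont t
  have hXAX : Tendsto (fun ε => X ε * A * X ε) (𝓝[>] 0)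
      (𝓝 (cfc (extZero f) B * A * cfc (extZero f) B)) :=
    ((continuous_id.matrix_mul continuous_const).matrix_mul continuous_id).tendsto _ |>.comp hX
  simp only [hconj, hB.1.matFun_eq_cfc]
  exact (continuousOn_retr_matFun hg_cont _ (hA.cfc_mul_mul_cfc _ B)).tendsto.comp
    (tendsto_nhdsWithin_iff.2 ⟨hXAX, Eventually.of_forall fun _ => hA.cfc_mul_mul_cfc _ B⟩)

/-- If `lim_{ε→0⁺} f(ε) = ∞`, `g` is monotone increasing with `g(0)=0`
and `g(t) → ∞`, and `supp A ⊆ supp B`, then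
`tr g(f(B+εI) A f(B+εI)) → tr g(f₀(B) A f₀(B))` as `ε → 0⁺`. -/
theorem stmt6 {n : ℕ}
    (f : ℝ → ℝ) (hf_pos : ∀ x ∈ Set.Ioi (0:ℝ), 0 < f x)
    (hf_cont : ContinuousOn f (Set.Ioi 0))
    (hf_lim : Filter.Tendsto f (nhdsWithin 0 (Set.Ioi 0)) Filter.atTop)
    (g : ℝ → ℝ) (hg_nonneg : ∀ x ∈ Set.Ici (0:ℝ), 0 ≤ g x)
    (hg_cont : ContinuousOn g (Set.Ici 0))
    (hg_mono : MonotoneOn g (Set.Ici 0)) (hg0 : g 0 = 0)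
    (hg_top : Filter.Tendsto g Filter.atTop Filter.atTop)
    (A B : Matrix (Fin n) (Fin n) ℂ) (hA : A.PosSemidef) (hB : B.PosSemidef)
    (hsupp : suppLE A B) :
    Filter.Tendsto
      (fun ε : ℝ => retr (matFun g
        (matFun f (B + (ε : ℂ) • 1) * A * matFun f (B + (ε : ℂ) • 1))))
      (nhdsWithin 0 (Set.Ioi 0))
      (nhds (retr (matFun g (matFun (extZero f) B * A * matFun (extZero f) B)))) :=
  stmt6_general f hf_cont g hg_cont A B hA hB hsupp
end

section
/- Let H be a finite-dimensional complex Hilbert space. Let f:(0,∞)→(0,∞) be continuous with lim_{ε→0⁺} f(ε) = ∞, and let g:[0,∞)→[0,∞) be continuous, monotone increasing, with g(0)=0 and lim_{t→∞} g(t) = ∞. Let A, B be positive semidefinite operators on H such that supp A is not contained in supp B. Then tr g( f(B+εI) A f(B+εI) ) tends to ∞ as ε → 0⁺. -/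
open Matrix
open scoped ComplexOrder

/-!
Since both operators are Hermitian and `supp A ⊄ supp B`, there is a vector `x ∈ ker B` with
`⟨x, A x⟩ > 0`. It is an eigenvector of `B + εI` for the eigenvalue `ε`, hence of `f(B + εI)` for
`f ε`, so `C_ε = f(B + εI) A f(B + εI)` satisfies `⟨x, C_ε x⟩ = f(ε)² ⟨x, A x⟩`. By the Rayleigh
bound some eigenvalue of `C_ε` is at least `f(ε)² ⟨x, A x⟩ / ‖x‖²`, and as `g ≥ 0` is monotone,
`tr g(C_ε) ≥ g(f(ε)² ⟨x, A x⟩ / ‖x‖²) → ∞`.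
-/

namespace Matrix.IsHermitian

variable {n 𝕜 : Type*} [RCLike 𝕜] [Fintype n]

lemma dotProduct_mul_mul_mulVec_of_mulVec_eq_smul {F : Matrix n n 𝕜} (hF : F.IsHermitian)
    (A : Matrix n n 𝕜) {x : n → 𝕜} {c : ℝ} (hx : F *ᵥ x = (c : 𝕜) • x) :
    star x ⬝ᵥ (F * A * F) *ᵥ x = (c : 𝕜) ^ 2 * (star x ⬝ᵥ A *ᵥ x) := by
  rw [← mulVec_mulVec, ← mulVec_mulVec, hx, dotProduct_mulVec, ← hF.eq, ← star_mulVec, hx]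
  simp only [mulVec_smul, star_smul, RCLike.star_def, RCLike.conj_ofReal, smul_dotProduct,
    dotProduct_smul, smul_eq_mul]
  ring

variable [DecidableEq n] {M : Matrix n n 𝕜}

lemma star_eigenvectorUnitary_mulVec_mulVec (hM : M.IsHermitian) (x : n → 𝕜) :
    (star (hM.eigenvectorUnitary : Matrix n n 𝕜)) *ᵥ (M *ᵥ x)
      = diagonal (RCLike.ofReal ∘ hM.eigenvalues) *ᵥ
          ((star (hM.eigenvectorUnitary : Matrix n n 𝕜)) *ᵥ x) := by
  rw [← hM.conjStarAlgAut_star_eigenvectorUnitary, Unitary.conjStarAlgAut_star_apply]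
  simp [mulVec_mulVec, mul_assoc]

lemma cfc_mulVec_of_mulVec_eq_smul (hM : M.IsHermitian) (f : ℝ → ℝ) {x : n → 𝕜} {c : ℝ}
    (hx : M *ᵥ x = (c : 𝕜) • x) : hM.cfc f *ᵥ x = (f c : 𝕜) • x := by
  set U : Matrix n n 𝕜 := (hM.eigenvectorUnitary : Matrix n n 𝕜)
  set y := star U *ᵥ x
  have hU : U * star U = 1 := Unitary.mul_star_self_of_mem hM.eigenvectorUnitary.2
  have hy : ∀ i, hM.eigenvalues i = c ∨ y i = 0 := fun i => by
    simpa [U, y, hx, mulVec_smul, mulVec_diagonal, RCLike.real_smul_eq_coe_mul] using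
      congrFun (hM.star_eigenvectorUnitary_mulVec_mulVec x).symm i
  have hfy : diagonal (RCLike.ofReal ∘ f ∘ hM.eigenvalues) *ᵥ y = (f c : 𝕜) • y := by
    ext i
    rcases hy i with h | h <;> simp [mulVec_diagonal, h]
  rw [IsHermitian.cfc, Unitary.conjStarAlgAut_apply, ← mulVec_mulVec, ← mulVec_mulVec, hfy,
    mulVec_smul, mulVec_mulVec, hU, one_mulVec]

lemma trace_cfc (hM : M.IsHermitian) (f : ℝ → ℝ) :
    (hM.cfc f).trace = ∑ i, (f (hM.eigenvalues i) : 𝕜) := by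
  rw [IsHermitian.cfc, Unitary.conjStarAlgAut_apply, trace_mul_cycle, Unitary.coe_star_mul_self,
    one_mul, trace_diagonal]
  rfl

lemma re_dotProduct_mulVec_le (hM : M.IsHermitian) {j : n}
    (hj : ∀ i, hM.eigenvalues i ≤ hM.eigenvalues j) (x : n → 𝕜) :
    RCLike.re (star x ⬝ᵥ M *ᵥ x) ≤ hM.eigenvalues j * RCLike.re (star x ⬝ᵥ x) := by
  set U : Matrix n n 𝕜 := (hM.eigenvectorUnitary : Matrix n n 𝕜)
  set y := star U *ᵥ x
  have hxy : x = U *ᵥ y := by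
    rw [mulVec_mulVec, Unitary.mul_star_self_of_mem hM.eigenvectorUnitary.2, one_mulVec]
  have hdot : ∀ v : n → 𝕜, star (U *ᵥ y) ⬝ᵥ v = star y ⬝ᵥ star U *ᵥ v := fun v => by
    rw [star_mulVec, ← dotProduct_mulVec, star_eq_conjTranspose]
  have hquad : star x ⬝ᵥ M *ᵥ x = ∑ i, (hM.eigenvalues i : 𝕜) * (star (y i) * y i) := by
    rw [hxy, hdot, hM.star_eigenvectorUnitary_mulVec_mulVec, ← hxy]
    simp only [dotProduct, mulVec_diagonal, Function.comp_apply, Pi.star_apply]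
    exact Finset.sum_congr rfl fun i _ => by ring
  have hnorm : star x ⬝ᵥ x = ∑ i, star (y i) * y i := by
    rw [hxy, hdot, ← hxy]
    rfl
  simp only [hquad, hnorm, RCLike.star_def, RCLike.conj_mul, map_sum, Finset.mul_sum]
  refine Finset.sum_le_sum fun i _ => ?_
  norm_cast
  exact mul_le_mul_of_nonneg_right (hj i) (by positivity)

end Matrix.IsHermitian

namespace Matrix

variable {n 𝕜 : Type*} [RCLike 𝕜] [Fintype n] [DecidableEq n]

lemma range_toLin'_le_of_ker_le {A B : Matrix n n 𝕜} (hA : A.IsHermitian) (hB : B.IsHermitian)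
    (h : LinearMap.ker (toLin' B) ≤ LinearMap.ker (toLin' A)) :
    LinearMap.range (toLin' A) ≤ LinearMap.range (toLin' B) := by
  have hA' := isSymmetric_toEuclideanLin_iff.mpr hA
  have hB' := isSymmetric_toEuclideanLin_iff.mpr hB
  have hker : LinearMap.ker (toEuclideanLin B) ≤ LinearMap.ker (toEuclideanLin A) := by
    intro w hw
    have hAw : A *ᵥ w.ofLp = 0 := h (congrArg WithLp.ofLp hw : B *ᵥ w.ofLp = 0)
    exact congrArg (WithLp.toLp 2) hAw
  have hrange : LinearMap.range (toEuclideanLin A) ≤ LinearMap.range (toEuclideanLin B) := by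
    rw [← Submodule.orthogonal_orthogonal (LinearMap.range (toEuclideanLin A)),
      ← Submodule.orthogonal_orthogonal (LinearMap.range (toEuclideanLin B)),
      hA'.orthogonal_range, hB'.orthogonal_range]
    exact Submodule.orthogonal_le hker
  rintro _ ⟨u, rfl⟩
  obtain ⟨v, hv⟩ := hrange ⟨WithLp.toLp 2 u, rfl⟩
  exact ⟨v.ofLp, by simpa using congrArg WithLp.ofLp hv⟩

end Matrix

lemma exists_mulVec_eq_zero_of_not_suppLE {n : ℕ} {A B : Matrix (Fin n) (Fin n) ℂ}
    (hA : A.PosSemidef) (hB : B.IsHermitian) (h : ¬ suppLE A B) :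
    ∃ x, B *ᵥ x = 0 ∧ 0 < (star x ⬝ᵥ A *ᵥ x).re := by
  obtain ⟨x, hBx, hAx⟩ : ∃ x, B *ᵥ x = 0 ∧ A *ᵥ x ≠ 0 := by
    by_contra! hker
    exact h (range_toLin'_le_of_ker_le hA.1 hB fun x hx => hker x hx)
  refine ⟨x, hBx, (Complex.pos_iff.mp (lt_of_le_of_ne (hA.dotProduct_mulVec_nonneg x) ?_)).1⟩
  exact fun h0 => hAx ((hA.dotProduct_mulVec_zero_iff x).mp h0.symm)

lemma isHermitian_matFun {n : ℕ} (f : ℝ → ℝ) (M : Matrix (Fin n) (Fin n) ℂ) :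
    (matFun f M).IsHermitian := by
  unfold matFun
  split_ifs with hM
  · rw [← hM.cfc_eq]
    exact cfc_predicate f M
  · exact isHermitian_zero

lemma matFun_mulVec_of_mulVec_eq_smul {n : ℕ} (f : ℝ → ℝ) {M : Matrix (Fin n) (Fin n) ℂ}
    (hM : M.IsHermitian) {x : Fin n → ℂ} {c : ℝ} (hx : M *ᵥ x = (c : ℂ) • x) :
    matFun f M *ᵥ x = (f c : ℂ) • x := by
  rw [matFun, dif_pos hM]
  exact hM.cfc_mulVec_of_mulVec_eq_smul f hx

lemma retr_matFun {n : ℕ} (g : ℝ → ℝ) {M : Matrix (Fin n) (Fin n) ℂ} (hM : M.IsHermitian) :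
    retr (matFun g M) = ∑ i, g (hM.eigenvalues i) := by
  simp [retr, matFun, dif_pos hM, hM.trace_cfc]

lemma le_retr_matFun {n : ℕ} {g : ℝ → ℝ} (hg_nonneg : ∀ t ∈ Set.Ici (0 : ℝ), 0 ≤ g t)
    (hg_mono : MonotoneOn g (Set.Ici 0)) {C : Matrix (Fin n) (Fin n) ℂ} (hC : C.PosSemidef)
    {x : Fin n → ℂ} (hx : x ≠ 0) :
    g ((star x ⬝ᵥ C *ᵥ x).re / (star x ⬝ᵥ x).re) ≤ retr (matFun g C) := by
  have : Nonempty (Fin n) := ⟨(Function.ne_iff.mp hx).choose⟩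
  obtain ⟨j, hj⟩ := Finite.exists_max hC.1.eigenvalues
  have hxx : 0 < (star x ⬝ᵥ x).re := by simpa using PosDef.one.re_dotProduct_pos hx
  have hratio : (star x ⬝ᵥ C *ᵥ x).re / (star x ⬝ᵥ x).re ≤ hC.1.eigenvalues j :=
    (div_le_iff₀ hxx).mpr (hC.1.re_dotProduct_mulVec_le hj x)
  calc g ((star x ⬝ᵥ C *ᵥ x).re / (star x ⬝ᵥ x).re)
      ≤ g (hC.1.eigenvalues j) :=
        hg_mono (div_nonneg (hC.re_dotProduct_nonneg x) hxx.le) (hC.eigenvalues_nonneg j) hratio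
    _ ≤ ∑ i, g (hC.1.eigenvalues i) :=
        Finset.single_le_sum (fun i _ => hg_nonneg _ (hC.eigenvalues_nonneg i))
          (Finset.mem_univ j)
    _ = retr (matFun g C) := (retr_matFun g hC.1).symm

theorem stmt7_general {n : ℕ}
    (f : ℝ → ℝ)
    (hf_lim : Filter.Tendsto f (nhdsWithin 0 (Set.Ioi 0)) Filter.atTop)
    (g : ℝ → ℝ) (hg_nonneg : ∀ x ∈ Set.Ici (0:ℝ), 0 ≤ g x)
    (hg_mono : MonotoneOn g (Set.Ici 0))
    (hg_top : Filter.Tendsto g Filter.atTop Filter.atTop)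
    (A B : Matrix (Fin n) (Fin n) ℂ) (hA : A.PosSemidef) (hB : B.PosSemidef)
    (hsupp : ¬ suppLE A B) :
    Filter.Tendsto
      (fun ε : ℝ => retr (matFun g
        (matFun f (B + (ε : ℂ) • 1) * A * matFun f (B + (ε : ℂ) • 1))))
      (nhdsWithin 0 (Set.Ioi 0)) Filter.atTop := by
  obtain ⟨x, hBx, hAx⟩ := exists_mulVec_eq_zero_of_not_suppLE hA hB.1 hsupp
  have hx : x ≠ 0 := by rintro rfl; simp at hAx
  set a := (star x ⬝ᵥ A *ᵥ x).re / (star x ⬝ᵥ x).re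
  have ha : 0 < a := div_pos hAx (by simpa using PosDef.one.re_dotProduct_pos hx)
  have hbound : ∀ ε : ℝ, g (f ε ^ 2 * a) ≤ retr (matFun g
      (matFun f (B + (ε : ℂ) • 1) * A * matFun f (B + (ε : ℂ) • 1))) := fun ε => by
    have hM : (B + (ε : ℂ) • 1).IsHermitian :=
      hB.1.add (isHermitian_one.smul (Complex.conj_ofReal ε))
    have hMx : (B + (ε : ℂ) • 1) *ᵥ x = (ε : ℂ) • x := by
      rw [add_mulVec, hBx, zero_add, smul_mulVec, one_mulVec]
    have hFx := matFun_mulVec_of_mulVec_eq_smul f hM hMx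
    have hC := hA.mul_mul_conjTranspose_same (matFun f (B + (ε : ℂ) • 1))
    rw [(isHermitian_matFun f _).eq] at hC
    convert le_retr_matFun hg_nonneg hg_mono hC hx using 2
    rw [(isHermitian_matFun f _).dotProduct_mul_mul_mulVec_of_mulVec_eq_smul A hFx]
    simp [a, mul_div_assoc, ← Complex.ofReal_pow]
  refine Filter.tendsto_atTop_mono hbound (hg_top.comp ?_)
  exact ((Filter.tendsto_pow_atTop two_ne_zero).comp hf_lim).atTop_mul_const ha

/-- If `lim_{ε→0⁺} f(ε) = ∞`, `g` is monotone increasing with `g(0)=0`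
and `g(t) → ∞`, and `supp A ⊄ supp B`, then `tr g(f(B+εI) A f(B+εI)) → ∞` as `ε → 0⁺`. -/
theorem stmt7 {n : ℕ}
    (f : ℝ → ℝ) (hf_pos : ∀ x ∈ Set.Ioi (0:ℝ), 0 < f x)
    (hf_cont : ContinuousOn f (Set.Ioi 0))
    (hf_lim : Filter.Tendsto f (nhdsWithin 0 (Set.Ioi 0)) Filter.atTop)
    (g : ℝ → ℝ) (hg_nonneg : ∀ x ∈ Set.Ici (0:ℝ), 0 ≤ g x)
    (hg_cont : ContinuousOn g (Set.Ici 0))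
    (hg_mono : MonotoneOn g (Set.Ici 0)) (hg0 : g 0 = 0)
    (hg_top : Filter.Tendsto g Filter.atTop Filter.atTop)
    (A B : Matrix (Fin n) (Fin n) ℂ) (hA : A.PosSemidef) (hB : B.PosSemidef)
    (hsupp : ¬ suppLE A B) :
    Filter.Tendsto
      (fun ε : ℝ => retr (matFun g
        (matFun f (B + (ε : ℂ) • 1) * A * matFun f (B + (ε : ℂ) • 1))))
      (nhdsWithin 0 (Set.Ioi 0)) Filter.atTop :=
  stmt7_general f hf_lim g hg_nonneg hg_mono hg_top A B hA hB hsupp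
end

section
/- Let n ≥ 2 be an integer and let f:(0,∞)→ℝ be a function (no regularity assumed) with the property that Σ_{k=1}^n b_k · f(a_k/b_k) = 0 holds whenever a_1,…,a_n and b_1,…,b_n are positive real numbers with Σ_{k=1}^n a_k = Σ_{k=1}^n b_k = 1. Then there is a real number c such that f(t) = c(t−1) for all t ∈ (0,∞). -/
/-!
Padding both tuples with a common constant kills all but two coordinates (those terms are
multiples of `f 1`, which vanishes by taking `a = b`), and rescaling the remaining two
coordinates shows that `p f t + q f r = 0` whenever `p, q, t, r > 0` and
`p (t - 1) + q (r - 1) = 0`. Pairing an arbitrary `t` with `2` (if `t < 1`) or with `1/2`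
(if `t > 1`) then forces `f t = f 2 * (t - 1)`.
-/

open Finset

def SumMulApplyDivVanishes (n : ℕ) (f : ℝ → ℝ) : Prop :=
  ∀ a b : Fin n → ℝ, (∀ k, 0 < a k) → (∀ k, 0 < b k) →
    (∑ k, a k) = 1 → (∑ k, b k) = 1 → (∑ k, b k * f (a k / b k)) = 0

def VanishesOnBalancedPairs (g : ℝ → ℝ) : Prop :=
  ∀ p q t r : ℝ, 0 < p → 0 < q → 0 < t → 0 < r →
    p * (t - 1) + q * (r - 1) = 0 → p * g t + q * g r = 0

theorem SumMulApplyDivVanishes.apply_one_eq_zero {n : ℕ} {f : ℝ → ℝ} (hn : n ≠ 0)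
    (hf : SumMulApplyDivVanishes n f) : f 1 = 0 := by
  have hn' : (0 : ℝ) < n := by positivity
  have hsum : ∑ _k : Fin n, (n : ℝ)⁻¹ = 1 := by simp [hn'.ne']
  have h := hf _ _ (fun _ => inv_pos.2 hn') (fun _ => inv_pos.2 hn') hsum hsum
  simpa [div_self, hn'.ne', ← mul_assoc] using h

/-- Both tuples are `(c p t, c q r, z, …, z)` and `(c p, c q, z, …, z)` with `z = 1 / (m + 2)`,
the scale `c` chosen so that the first two coordinates carry mass `2 z`. -/
theorem SumMulApplyDivVanishes.vanishesOnBalancedPairs {m : ℕ} {f : ℝ → ℝ}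
    (hf : SumMulApplyDivVanishes (m + 2) f) : VanishesOnBalancedPairs f := by
  intro p q t r hp hq ht hr hbal
  set z : ℝ := (m + 2 : ℝ)⁻¹ with hz
  have hz0 : 0 < z := by positivity
  set c : ℝ := 2 * z / (p + q) with hc
  have hc0 : 0 < c := by positivity
  have ha : ∑ k, (Fin.cons (c * p * t) (Fin.cons (c * q * r) fun _ => z) : Fin (m + 2) → ℝ) k
      = 1 := by
    simp only [Fin.sum_cons, sum_const, card_univ, Fintype.card_fin, nsmul_eq_mul, hc, hz]
    field_simp
    linear_combination 2 * hbal
  have hb : ∑ k, (Fin.cons (c * p) (Fin.cons (c * q) fun _ => z) : Fin (m + 2) → ℝ) k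
      = 1 := by
    simp only [Fin.sum_cons, sum_const, card_univ, Fintype.card_fin, nsmul_eq_mul, hc, hz]
    field_simp
    ring
  have h := hf _ _
    (Fin.cases (by positivity : 0 < c * p * t)
      (Fin.cases (by positivity : 0 < c * q * r) fun _ => hz0))
    (Fin.cases (mul_pos hc0 hp) (Fin.cases (mul_pos hc0 hq) fun _ => hz0)) ha hb
  simp only [Fin.sum_univ_succ, Fin.cons_zero, Fin.cons_succ, div_self hz0.ne',
    hf.apply_one_eq_zero (by omega), mul_zero, sum_const_zero, add_zero,
    mul_div_cancel_left₀ _ (mul_pos hc0 hp).ne',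
    mul_div_cancel_left₀ _ (mul_pos hc0 hq).ne'] at h
  have h' : c * (p * f t + q * f r) = 0 := by linear_combination h
  exact (mul_eq_zero.1 h').resolve_left hc0.ne'

theorem VanishesOnBalancedPairs.exists_eq_mul_sub_one {g : ℝ → ℝ}
    (hg : VanishesOnBalancedPairs g) : ∃ c : ℝ, ∀ t : ℝ, 0 < t → g t = c * (t - 1) := by
  refine ⟨g 2, fun t ht => ?_⟩
  rcases lt_trichotomy t 1 with h | rfl | h
  · have h₁ := hg (1 - t) 1 2 t (by linarith) one_pos two_pos ht (by ring)
    linear_combination h₁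
  · have h₁ := hg 1 1 1 1 one_pos one_pos one_pos one_pos (by ring)
    linear_combination h₁ / 2
  · have h₁ := hg (1 / 2) (t - 1) t (1 / 2) (by norm_num) (by linarith) ht (by norm_num)
      (by ring)
    have h₂ := hg (1 / 2) 1 2 (1 / 2) (by norm_num) one_pos two_pos (by norm_num) (by ring)
    linear_combination 2 * h₁ - 2 * (t - 1) * h₂

/-- If `f : (0,∞) → ℝ` satisfies `∑ b_k f(a_k/b_k) = 0` for all positive
tuples `a`, `b` of length `n ≥ 2` summing to `1`, then `f(t) = c(t−1)` for some constant `c`. -/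
theorem stmt8 (n : ℕ) (hn : 2 ≤ n) (f : ℝ → ℝ)
    (hf : ∀ a b : Fin n → ℝ, (∀ k, 0 < a k) → (∀ k, 0 < b k) →
      (∑ k, a k) = 1 → (∑ k, b k) = 1 → (∑ k, b k * f (a k / b k)) = 0) :
    ∃ c : ℝ, ∀ t : ℝ, 0 < t → f t = c * (t - 1) := by
  obtain ⟨m, rfl⟩ : ∃ m, n = m + 2 := ⟨n - 2, by omega⟩
  exact SumMulApplyDivVanishes.vanishesOnBalancedPairs (f := f) hf |>.exists_eq_mul_sub_one
end

section
/- Let n ≥ 1 be an integer, α ∈ (0,1)∪(1,∞), and let t_1, …, t_n be positive real numbers. If n · Σ_{k=1}^n t_k^{2α²/(1−α)} = (Σ_{k=1}^n t_k^{−2α}) · (Σ_{k=1}^n t_k^{2α/(1−α)}), then t_1 = t_2 = … = t_n. -/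
/-!
Tchebychef's sum identity writes `n ∑ xₖ yₖ - (∑ xₖ)(∑ yₖ)` as half the double sum of
`(xᵢ - xⱼ)(yᵢ - yⱼ)`. When `x` and `y` are strictly similarly (or oppositely) ordered functions
of `t`, every term with `tᵢ ≠ tⱼ` is strictly positive (negative), so equality forces all `tₖ`
to coincide. Here `x = t^(-2α)` is strictly decreasing and `y = t^(2α/(1-α))` is strictly
increasing for `α < 1` and strictly decreasing for `α > 1`, while `xₖ yₖ = tₖ^(2α²/(1-α))`.
-/

open Finset

section Chebyshev

variable {ι β R : Type*} [Fintype ι] [CommRing R]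

theorem sum_sum_sub_mul_sub (x y : ι → R) :
    ∑ i, ∑ j, (x i - x j) * (y i - y j) =
      2 * (Fintype.card ι * ∑ k, x k * y k - (∑ k, x k) * ∑ k, y k) := by
  simp only [sub_mul, mul_sub, sum_sub_distrib, ← sum_mul, ← mul_sum, sum_const, card_univ,
    nsmul_eq_mul, mul_assoc]
  ring

variable [LinearOrder β] [LinearOrder R] [IsStrictOrderedRing R]

theorem eq_of_card_mul_sum_mul_eq_of_strictMonoOn {s : Set β} {f g : β → R}
    (hf : StrictMonoOn f s) (hg : StrictMonoOn g s) {t : ι → β} (ht : ∀ k, t k ∈ s)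
    (heq : (Fintype.card ι : R) * ∑ k, f (t k) * g (t k) = (∑ k, f (t k)) * ∑ k, g (t k)) :
    ∀ i j, t i = t j := by
  have hpos : ∀ i j, t i ≠ t j → 0 < (f (t i) - f (t j)) * (g (t i) - g (t j)) := by
    intro i j hne
    rcases hne.lt_or_gt with hlt | hgt
    · exact mul_pos_of_neg_of_neg (sub_neg.2 (hf (ht i) (ht j) hlt))
        (sub_neg.2 (hg (ht i) (ht j) hlt))
    · exact mul_pos (sub_pos.2 (hf (ht j) (ht i) hgt)) (sub_pos.2 (hg (ht j) (ht i) hgt))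
  have hnonneg : ∀ i j, 0 ≤ (f (t i) - f (t j)) * (g (t i) - g (t j)) := by
    intro i j
    by_cases h : t i = t j
    · simp [h]
    · exact (hpos i j h).le
  have hzero : ∑ i, ∑ j, (f (t i) - f (t j)) * (g (t i) - g (t j)) = 0 := by
    rw [sum_sum_sub_mul_sub (fun k ↦ f (t k)) (fun k ↦ g (t k)), heq, sub_self, mul_zero]
  intro i j
  by_contra hne
  refine (sum_pos' (fun i _ ↦ sum_nonneg fun j _ ↦ hnonneg i j) ⟨i, mem_univ i, ?_⟩).ne' hzero
  exact sum_pos' (fun j _ ↦ hnonneg i j) ⟨j, mem_univ j, hpos i j hne⟩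

theorem eq_of_card_mul_sum_mul_eq_of_strictAntiOn {s : Set β} {f g : β → R}
    (hf : StrictAntiOn f s) (hg : StrictAntiOn g s) {t : ι → β} (ht : ∀ k, t k ∈ s)
    (heq : (Fintype.card ι : R) * ∑ k, f (t k) * g (t k) = (∑ k, f (t k)) * ∑ k, g (t k)) :
    ∀ i j, t i = t j :=
  eq_of_card_mul_sum_mul_eq_of_strictMonoOn hf.neg hg.neg ht <| by
    simpa only [Pi.neg_apply, neg_mul_neg, sum_neg_distrib] using heq

theorem eq_of_card_mul_sum_mul_eq_of_strictAntiOn_of_strictMonoOn {s : Set β} {f g : β → R}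
    (hf : StrictAntiOn f s) (hg : StrictMonoOn g s) {t : ι → β} (ht : ∀ k, t k ∈ s)
    (heq : (Fintype.card ι : R) * ∑ k, f (t k) * g (t k) = (∑ k, f (t k)) * ∑ k, g (t k)) :
    ∀ i j, t i = t j :=
  eq_of_card_mul_sum_mul_eq_of_strictMonoOn hf.neg hg ht <| by
    simpa only [Pi.neg_apply, neg_mul, sum_neg_distrib, mul_neg, neg_inj] using heq

end Chebyshev

theorem stmt13_general (n : ℕ) (α : ℝ) (hα : α ∈ Set.Ioo (0:ℝ) 1 ∪ Set.Ioi (1:ℝ))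
    (t : Fin n → ℝ) (ht : ∀ k, 0 < t k)
    (heq : (n : ℝ) * ∑ k, t k ^ (2 * α ^ 2 / (1 - α)) =
      (∑ k, t k ^ (-(2 * α))) * (∑ k, t k ^ (2 * α / (1 - α)))) :
    ∀ i j, t i = t j := by
  simp only [Set.mem_union, Set.mem_Ioo, Set.mem_Ioi] at hα
  have hα₀ : 0 < α := by rcases hα with ⟨h, _⟩ | h <;> linarith
  have hsplit : ∀ k, t k ^ (2 * α ^ 2 / (1 - α)) =
      t k ^ (-(2 * α)) * t k ^ (2 * α / (1 - α)) := fun k ↦ by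
    have hα₁ : 1 - α ≠ 0 := by rcases hα with ⟨_, h⟩ | h <;> linarith
    rw [← Real.rpow_add (ht k)]
    congr 1
    field_simp
    ring
  simp only [hsplit] at heq
  rw [show (n : ℝ) = Fintype.card (Fin n) by simp] at heq
  have hf := Real.strictAntiOn_rpow_Ioi_of_exponent_neg (r := -(2 * α)) (by linarith)
  rcases hα with ⟨-, hα₁⟩ | hα₁
  · have hg := Real.strictMonoOn_rpow_Ici_of_exponent_pos (r := 2 * α / (1 - α))
      (div_pos (by linarith) (by linarith))
    exact eq_of_card_mul_sum_mul_eq_of_strictAntiOn_of_strictMonoOn hf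
      (hg.mono Set.Ioi_subset_Ici_self) ht heq
  · have hg := Real.strictAntiOn_rpow_Ioi_of_exponent_neg (r := 2 * α / (1 - α))
      (div_neg_of_pos_of_neg (by linarith) (by linarith))
    exact eq_of_card_mul_sum_mul_eq_of_strictAntiOn hf hg ht heq

/-- Equality case of Tchebychef's inequality for the power sequences
arising in the proof of the structure of Rényi divergence preservers: if
`n · ∑ t_k^{2α²/(1−α)} = (∑ t_k^{−2α}) · (∑ t_k^{2α/(1−α)})` for positive `t_k`,
then all the `t_k` are equal. -/
theorem stmt13 (n : ℕ) (hn : 1 ≤ n) (α : ℝ) (hα : α ∈ Set.Ioo (0:ℝ) 1 ∪ Set.Ioi (1:ℝ))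
    (t : Fin n → ℝ) (ht : ∀ k, 0 < t k)
    (heq : (n : ℝ) * ∑ k, t k ^ (2 * α ^ 2 / (1 - α)) =
      (∑ k, t k ^ (-(2 * α))) * (∑ k, t k ^ (2 * α / (1 - α)))) :
    ∀ i j, t i = t j :=
  stmt13_general n α hα t ht heq
end

section
/- Let H be a finite-dimensional complex Hilbert space. Let f:(0,∞)→(0,∞) be continuous with lim_{ε→0⁺} f(ε)=0, and let g:[0,∞)→[0,∞) be an injective continuous function with g(0)=0; let f₀:[0,∞)→[0,∞) be the continuous extension of f with f₀(0)=0. Then for all density operators A, B on H: AB = 0 if and only if tr g( f₀(B) A f₀(B) ) = 0. -/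
open Matrix
open scoped ComplexOrder

/-! Write `F = f₀(B)`. On the spectrum of `B ≥ 0` the functions `f₀` and `id` vanish at the same
points, so each of `B`, `F` is the other times a function of `B`, and `A B = 0 ↔ A F = 0`.
Writing `A = Cᴴ C`, we get `F A F = (C F)ᴴ (C F)`, hence `A F = 0 ↔ F A F = 0`. Finally
`tr g(F A F) = ∑ᵢ g(λᵢ)` is a sum of nonnegative terms, and injectivity of `g` with `g 0 = 0`
makes it vanish exactly when all eigenvalues `λᵢ` of `F A F ≥ 0` do. -/

namespace Matrix

variable {ι 𝕜 : Type*} [Fintype ι] [DecidableEq ι] [RCLike 𝕜]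

lemma mul_cfc_eq_zero_of_mul_cfc_eq_zero {X B : Matrix ι ι 𝕜} {h h' : ℝ → ℝ}
    (hzero : ∀ t ∈ spectrum ℝ B, h t = 0 → h' t = 0) (H : X * cfc h B = 0) :
    X * cfc h' B = 0 := by
  -- `h' = h * (h' / h)` on the (finite) spectrum, since `h' t / 0 = 0` where `h t = 0`.
  have hfactor : cfc h' B = cfc h B * cfc (fun t ↦ h' t / h t) B := by
    rw [← cfc_mul _ _ _ (B.finite_real_spectrum.continuousOn _)
      (B.finite_real_spectrum.continuousOn _)]
    refine cfc_congr fun t ht ↦ ?_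
    by_cases hht : h t = 0
    · simp [hht, hzero t ht hht]
    · field_simp
  rw [hfactor, ← mul_assoc, H, zero_mul]

lemma mul_cfc_eq_zero_iff_of_zero_iff {X B : Matrix ι ι 𝕜} {h h' : ℝ → ℝ}
    (hzero : ∀ t ∈ spectrum ℝ B, h t = 0 ↔ h' t = 0) :
    X * cfc h B = 0 ↔ X * cfc h' B = 0 :=
  ⟨mul_cfc_eq_zero_of_mul_cfc_eq_zero fun t ht ↦ (hzero t ht).1,
    mul_cfc_eq_zero_of_mul_cfc_eq_zero fun t ht ↦ (hzero t ht).2⟩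

open scoped MatrixOrder in
lemma PosSemidef.conjTranspose_mul_mul_same_eq_zero_iff {A : Matrix ι ι 𝕜} (hA : A.PosSemidef)
    (F : Matrix ι ι 𝕜) : Fᴴ * A * F = 0 ↔ A * F = 0 := by
  obtain ⟨C, rfl⟩ := CStarAlgebra.nonneg_iff_eq_star_mul_self.mp hA.nonneg
  rw [star_eq_conjTranspose, conjTranspose_mul_self_mul_eq_zero, ← mul_assoc Fᴴ,
    ← conjTranspose_mul, mul_assoc, conjTranspose_mul_self_eq_zero]

lemma IsHermitian.trace_cfc_s15 {A : Matrix ι ι 𝕜} (hA : A.IsHermitian) (h : ℝ → ℝ) :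
    (cfc h A).trace = ∑ i, (h (hA.eigenvalues i) : 𝕜) := by
  rw [hA.cfc_eq, IsHermitian.cfc, Unitary.conjStarAlgAut_apply, trace_mul_cycle,
    Unitary.coe_star_mul_self, one_mul, trace_diagonal]
  rfl

lemma PosSemidef.re_trace_cfc_eq_zero_iff {M : Matrix ι ι 𝕜} (hM : M.PosSemidef) {g : ℝ → ℝ}
    (hg_nonneg : ∀ x ∈ Set.Ici (0:ℝ), 0 ≤ g x) (hg_inj : Set.InjOn g (Set.Ici 0)) (hg0 : g 0 = 0) :
    RCLike.re (cfc g M).trace = 0 ↔ M = 0 := by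
  rw [hM.1.trace_cfc_s15, ← hM.1.eigenvalues_eq_zero_iff, map_sum]
  simp only [RCLike.ofReal_re]
  rw [Finset.sum_eq_zero_iff_of_nonneg fun i _ ↦ hg_nonneg _ (hM.eigenvalues_nonneg i)]
  simp only [Finset.mem_univ, true_implies, funext_iff, Pi.zero_apply]
  refine forall_congr' fun i ↦ ?_
  rw [← hg_inj.eq_iff (hM.eigenvalues_nonneg i) Set.self_mem_Ici, hg0]

end Matrix

lemma matFun_eq_cfc {n : ℕ} {A : Matrix (Fin n) (Fin n) ℂ} (hA : A.IsHermitian) (h : ℝ → ℝ) :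
    matFun h A = cfc h A := by
  rw [matFun, dif_pos hA, hA.cfc_eq]

lemma extZero_eq_zero_iff {f : ℝ → ℝ} (hf_pos : ∀ x ∈ Set.Ioi (0:ℝ), 0 < f x) {t : ℝ}
    (ht : 0 ≤ t) : extZero f t = 0 ↔ t = 0 := by
  rcases ht.eq_or_lt with rfl | ht
  · simp [extZero]
  · simp [extZero, ht, (hf_pos t ht).ne', ht.ne']

theorem stmt15_general {n : ℕ}
    (f : ℝ → ℝ) (hf_pos : ∀ x ∈ Set.Ioi (0:ℝ), 0 < f x)
    (g : ℝ → ℝ) (hg_nonneg : ∀ x ∈ Set.Ici (0:ℝ), 0 ≤ g x)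
    (hg_inj : Set.InjOn g (Set.Ici 0)) (hg0 : g 0 = 0)
    (A B : Matrix (Fin n) (Fin n) ℂ)
    (hA : A.PosSemidef) (hB : B.PosSemidef) :
    A * B = 0 ↔ Dfg f g A B = 0 := by
  set F := cfc (extZero f) B
  have hF : F.IsHermitian := cfc_predicate (extZero f) B
  have hFAF : (F * A * F).PosSemidef := by
    simpa only [hF.eq] using hA.conjTranspose_mul_mul_same F
  have hspec : ∀ t ∈ spectrum ℝ B, t = 0 ↔ extZero f t = 0 := by
    rw [hB.1.spectrum_real_eq_range_eigenvalues]
    rintro _ ⟨i, rfl⟩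
    exact (extZero_eq_zero_iff hf_pos (hB.eigenvalues_nonneg i)).symm
  have hDfg : Dfg f g A B = RCLike.re (cfc g (F * A * F)).trace := by
    rw [Dfg, retr, matFun_eq_cfc hB.1, matFun_eq_cfc hFAF.1]
    rfl
  calc A * B = 0 ↔ A * F = 0 := by
        conv_lhs => rw [← cfc_id' ℝ B hB.1]
        exact mul_cfc_eq_zero_iff_of_zero_iff hspec
    _ ↔ F * A * F = 0 := by rw [← hA.conjTranspose_mul_mul_same_eq_zero_iff, hF.eq]
    _ ↔ Dfg f g A B = 0 := by rw [hDfg, hFAF.re_trace_cfc_eq_zero_iff hg_nonneg hg_inj hg0]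

/-- For densities `A, B`: `AB = 0` iff `D'_{f,g}(A‖B) = 0`
(case `lim_{ε→0⁺} f(ε) = 0`, `g` injective with `g(0)=0`). -/
theorem stmt15 {n : ℕ}
    (f : ℝ → ℝ) (hf_pos : ∀ x ∈ Set.Ioi (0:ℝ), 0 < f x)
    (hf_cont : ContinuousOn f (Set.Ioi 0))
    (hf_lim : Filter.Tendsto f (nhdsWithin 0 (Set.Ioi 0)) (nhds 0))
    (g : ℝ → ℝ) (hg_nonneg : ∀ x ∈ Set.Ici (0:ℝ), 0 ≤ g x)
    (hg_cont : ContinuousOn g (Set.Ici 0))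
    (hg_inj : Set.InjOn g (Set.Ici 0)) (hg0 : g 0 = 0)
    (A B : Matrix (Fin n) (Fin n) ℂ)
    (hA : A.PosSemidef) (hB : B.PosSemidef) (htA : A.trace = 1) (htB : B.trace = 1) :
    A * B = 0 ↔ Dfg f g A B = 0 :=
  stmt15_general f hf_pos g hg_nonneg hg_inj hg0 A B hA hB
end

section
/- Let H be a finite-dimensional complex Hilbert space. Let f:(0,∞)→(0,∞) be strictly monotone decreasing and strictly convex with lim_{ε→0⁺} f(ε)=+∞, and let g:[0,∞)→[0,∞) be strictly monotone increasing, continuous, with g(0)=0 and lim_{t→∞} g(t)=∞, and either strictly convex or strictly concave. Suppose φ: S(H) → S(H) satisfies D'_{f,g}(φ(A)‖φ(B)) = D'_{f,g}(A‖B) for all A, B ∈ S(H). Then for all A, B ∈ S(H): supp A ⊆ supp B if and only if supp φ(A) ⊆ supp φ(B); consequently, rank φ(A) = rank A for every A ∈ S(H). -/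
open Matrix
open scoped ComplexOrder

/-!
`D'_{f,g}(A‖B)` is finite exactly when `supp A ⊆ supp B`, so a map preserving `D'_{f,g}`
preserves support inclusion in both directions. Since every nonzero subspace is the support of
a density operator, `supp A ↦ supp φ(A)` is then an order embedding of the nonzero subspaces
into themselves. Along a chain of subspaces growing one dimension at a time such an embedding
grows at least as fast; applied to the chains from a line up to `supp A` and from `supp A` up to
the whole space, this gives `rank φ(A) ≥ rank A` and `rank φ(A) ≤ rank A`.
-/

section SubspaceOrderEmbedding

open Module Submodule

variable {K V ι : Type*} [DivisionRing K] [AddCommGroup V] [Module K V] [FiniteDimensional K V]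
  {s t : ι → Submodule K V}

theorem finrank_add_finrank_le_of_le (hst : ∀ i j, s i ≤ s j ↔ t i ≤ t j)
    (hs : ∀ W : Submodule K V, W ≠ ⊥ → ∃ i, s i = W) {i j : ι} (hji : s j ≤ s i) :
    finrank K (t j) + finrank K (s i) ≤ finrank K (t i) + finrank K (s j) := by
  induction hd : finrank K (s i) - finrank K (s j) generalizing j with
  | zero =>
    have hsji : s j = s i := eq_of_le_of_finrank_le hji (by have := finrank_mono hji; omega)
    have htji : t j = t i := le_antisymm ((hst j i).1 hsji.le) ((hst i j).1 hsji.ge)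
    rw [htji, hsji]
  | succ d ih =>
    obtain ⟨v, hvi, hvj⟩ : ∃ v ∈ s i, v ∉ s j := by
      by_contra! h
      have := finrank_mono h
      omega
    have hv : v ∈ s j ⊔ span K {v} := mem_sup_right (mem_span_singleton_self v)
    obtain ⟨k, hk⟩ := hs (s j ⊔ span K {v}) ((Submodule.ne_bot_iff _).2
      ⟨v, hv, fun h => hvj (h ▸ zero_mem _)⟩)
    have hsk : finrank K (s k) = finrank K (s j) + 1 := hk ▸ finrank_sup_span_singleton hvj
    have hsjk : s j < s k := hk ▸ lt_of_le_of_ne le_sup_left fun h => hvj (h ▸ hv)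
    have htjk : finrank K (t j) < finrank K (t k) := finrank_lt_finrank_of_lt <|
      lt_of_le_not_ge ((hst j k).1 hsjk.le) fun h => hsjk.not_ge ((hst k j).2 h)
    have hski : s k ≤ s i := hk ▸ sup_le hji ((span_singleton_le_iff_mem v _).2 hvi)
    have := ih hski (by omega)
    omega

theorem finrank_eq_finrank_of_le_iff_le (hst : ∀ i j, s i ≤ s j ↔ t i ≤ t j)
    (hs : ∀ W : Submodule K V, W ≠ ⊥ → ∃ i, s i = W) (ht : ∀ i, t i ≠ ⊥) (i : ι) :
    finrank K (t i) = finrank K (s i) := by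
  apply le_antisymm
  · have hV : (⊤ : Submodule K V) ≠ ⊥ := fun hV => ht i (eq_bot_iff.2 (hV ▸ le_top))
    obtain ⟨top, htop⟩ := hs ⊤ hV
    have := finrank_add_finrank_le_of_le hst hs (htop ▸ le_top : s i ≤ s top)
    have := finrank_le (t top)
    rw [htop, finrank_top] at *
    omega
  · by_cases hi : s i = ⊥
    · rw [hi, finrank_bot]
      exact Nat.zero_le _
    obtain ⟨v, hvi, hv⟩ := exists_mem_ne_zero_of_ne_bot hi
    obtain ⟨j, hj⟩ := hs (span K {v}) (by simpa using hv)
    have := finrank_add_finrank_le_of_le hst hs (hj ▸ (span_singleton_le_iff_mem v _).2 hvi)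
    have := one_le_finrank_iff.2 (ht j)
    rw [hj, finrank_span_singleton hv] at *
    omega

end SubspaceOrderEmbedding

theorem Matrix.exists_posSemidef_range_toLin'_eq {𝕜 m : Type*} [RCLike 𝕜] [Fintype m]
    [DecidableEq m] (W : Submodule 𝕜 (m → 𝕜)) :
    ∃ M : Matrix m m 𝕜, M.PosSemidef ∧ LinearMap.range M.toLin' = W := by
  obtain ⟨C, hC⟩ := W.exists_isCompl
  set P := LinearMap.toMatrix' (W.projection C hC)
  have hP : LinearMap.range P.toLin' = W := by simp [P]
  refine ⟨P * Pᴴ, posSemidef_self_mul_conjTranspose P, ?_⟩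
  have hle : LinearMap.range (P * Pᴴ).toLin' ≤ W :=
    hP ▸ (toLin'_mul P Pᴴ ▸ LinearMap.range_comp_le_range _ _)
  refine Submodule.eq_of_le_of_finrank_eq hle ?_
  rw [← hP, toLin'_apply', toLin'_apply']
  exact rank_self_mul_conjTranspose P

namespace Density

variable {n : ℕ}

def supp (A : Density n) : Submodule ℂ (Fin n → ℂ) := LinearMap.range A.1.toLin'

theorem rank_eq_finrank_supp (A : Density n) : A.1.rank = Module.finrank ℂ A.supp := by
  rw [Matrix.rank, supp, toLin'_apply']

theorem supp_ne_bot (A : Density n) : A.supp ≠ ⊥ := by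
  intro h
  have hA : A.1 = 0 := toLin'.injective (by rw [LinearMap.range_eq_bot.1 h, map_zero])
  simpa [hA] using A.2.2

theorem exists_supp_eq {W : Submodule ℂ (Fin n → ℂ)} (hW : W ≠ ⊥) :
    ∃ A : Density n, A.supp = W := by
  obtain ⟨M, hM, hMW⟩ := exists_posSemidef_range_toLin'_eq W
  have hM0 : M.trace ≠ 0 := by
    rw [Ne, hM.trace_eq_zero_iff]
    rintro rfl
    exact hW (by simpa using hMW.symm)
  refine ⟨⟨M.trace⁻¹ • M, hM.smul (inv_nonneg.2 hM.trace_nonneg),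
    by simp [inv_mul_cancel₀ hM0]⟩, ?_⟩
  change LinearMap.range (toLin' (M.trace⁻¹ • M)) = W
  rw [map_smul, LinearMap.range_smul _ _ (inv_ne_zero hM0), hMW]

end Density

theorem DfgE_ne_top_iff {n : ℕ} (f g : ℝ → ℝ) (A B : Matrix (Fin n) (Fin n) ℂ) :
    DfgE f g A B ≠ ⊤ ↔ suppLE A B := by
  unfold DfgE
  split_ifs with h <;> simp [h]

theorem stmt17_general {n : ℕ}
    (f : ℝ → ℝ)
    (g : ℝ → ℝ)
    (φ : Density n → Density n)
    (hφ : ∀ A B : Density n, DfgE f g (φ A).1 (φ B).1 = DfgE f g A.1 B.1) :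
    (∀ A B : Density n, (suppLE A.1 B.1 ↔ suppLE (φ A).1 (φ B).1)) ∧
    (∀ A : Density n, (φ A).1.rank = A.1.rank) := by
  have hsupp (A B : Density n) : suppLE A.1 B.1 ↔ suppLE (φ A).1 (φ B).1 := by
    rw [← DfgE_ne_top_iff f g, ← DfgE_ne_top_iff f g, hφ]
  refine ⟨hsupp, fun A => ?_⟩
  rw [Density.rank_eq_finrank_supp, Density.rank_eq_finrank_supp]
  exact finrank_eq_finrank_of_le_iff_le (s := Density.supp) (t := fun A => (φ A).supp) hsupp
    (fun _ hW => Density.exists_supp_eq hW) (fun A => (φ A).supp_ne_bot) A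

/-- A map on densities preserving `D'_{f,g}`
(case `lim_{ε→0⁺} f(ε) = ∞`) preserves support inclusion in both directions,
and consequently preserves the rank. -/
theorem stmt17 {n : ℕ}
    (f : ℝ → ℝ) (hf_pos : ∀ x ∈ Set.Ioi (0:ℝ), 0 < f x)
    (hf_anti : StrictAntiOn f (Set.Ioi 0))
    (hf_conv : StrictConvexOn ℝ (Set.Ioi 0) f)
    (hf_lim : Filter.Tendsto f (nhdsWithin 0 (Set.Ioi 0)) Filter.atTop)
    (g : ℝ → ℝ) (hg_nonneg : ∀ x ∈ Set.Ici (0:ℝ), 0 ≤ g x)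
    (hg_mono : StrictMonoOn g (Set.Ici 0))
    (hg_cont : ContinuousOn g (Set.Ici 0)) (hg0 : g 0 = 0)
    (hg_top : Filter.Tendsto g Filter.atTop Filter.atTop)
    (hg_cc : StrictConvexOn ℝ (Set.Ici 0) g ∨ StrictConcaveOn ℝ (Set.Ici 0) g)
    (φ : Density n → Density n)
    (hφ : ∀ A B : Density n, DfgE f g (φ A).1 (φ B).1 = DfgE f g A.1 B.1) :
    (∀ A B : Density n, (suppLE A.1 B.1 ↔ suppLE (φ A).1 (φ B).1)) ∧
    (∀ A : Density n, (φ A).1.rank = A.1.rank) :=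
  stmt17_general f g φ hφ
end
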